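/- arXiv:2112.06770 — 2 statements merged into one kernel-verified Lean document; each statement's English description precedes it below -/
import Mathlib

section
/- For every integer q ≥ 3, the element G of PSL(2,ℝ) has order exactly q: G^q = 1, and G^k ≠ 1 for every integer k with 1 ≤ k < q. -/
open Matrix

/-- `λ_q = 2 cos (π / q)`. -/
noncomputable def lam (q : ℕ) : ℝ := 2 * Real.cos (Real.pi / q)

/-- The matrix `K = [[0,-1],[1,0]]` as an element of `SL(2,ℝ)`. -/
noncomputable def Kmat : Matrix.SpecialLinearGroup (Fin 2) ℝ :=
  ⟨!![0, -1; 1, 0], by simp [Matrix.det_fin_two_of]⟩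

/-- The matrix `G = [[0,-1],[1,λ_q]]` as an element of `SL(2,ℝ)`. -/
noncomputable def Gmat (q : ℕ) : Matrix.SpecialLinearGroup (Fin 2) ℝ :=
  ⟨!![0, -1; 1, lam q], by simp [Matrix.det_fin_two_of]⟩

/-- `PSL(2,ℝ)`, the quotient of `SL(2,ℝ)` by its center `{±I}`. -/
abbrev PSL2R : Type :=
  Matrix.SpecialLinearGroup (Fin 2) ℝ ⧸ Subgroup.center (Matrix.SpecialLinearGroup (Fin 2) ℝ)

/-- The class of `K` in `PSL(2,ℝ)`. -/
noncomputable def Kpsl : PSL2R := QuotientGroup.mk Kmat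

/-- The class of `G` in `PSL(2,ℝ)`. -/
noncomputable def Gpsl (q : ℕ) : PSL2R := QuotientGroup.mk (Gmat q)

/-! With `θ = π / q`, `G` is the companion matrix of `X² - 2 cos θ X + 1`, whose roots are `e^{±iθ}`.
The addition formula `sin (x + θ) = 2 cos θ sin x - sin (x - θ)` gives the Chebyshev-type closed form
`sin θ • G^k = !![-sin ((k-1)θ), -sin (kθ); sin (kθ), sin ((k+1)θ)]`. At `k = q` this is
`-sin θ • 1`, so `G^q = -1`, which is trivial in `PSL(2,ℝ)`; for `0 < k < q` the lower-left entry
`sin (kθ)` is positive, so `G^k` is not scalar, i.e. not in the center `{±1}` of `SL(2,ℝ)`. -/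

open Real

lemma sin_smul_companion_two_cos_pow (θ : ℝ) (k : ℕ) :
    sin θ • (!![0, -1; 1, 2 * cos θ] : Matrix (Fin 2) (Fin 2) ℝ) ^ k =
      !![-sin ((k - 1) * θ), -sin (k * θ); sin (k * θ), sin ((k + 1) * θ)] := by
  have sin_succ (x : ℝ) : sin ((x + 1) * θ) = 2 * cos θ * sin (x * θ) - sin ((x - 1) * θ) := by
    rw [add_mul, sub_mul, one_mul, sin_add, sin_sub]; ring
  induction k with
  | zero => ext i j; fin_cases i <;> fin_cases j <;> simp
  | succ k ih =>
    rw [pow_succ, ← smul_mul_assoc, ih]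
    ext i j; fin_cases i <;> fin_cases j <;> simp [Matrix.mul_apply]
    · linarith [sin_succ k]
    · linarith [add_sub_cancel_right (k : ℝ) 1 ▸ sin_succ (k + 1)]

lemma sin_pi_div_natCast_pos {q : ℕ} (hq : 2 ≤ q) : 0 < sin (π / q) :=
  sin_pos_of_pos_of_lt_pi (by positivity) (div_lt_self pi_pos (by exact_mod_cast hq))

lemma Matrix.SpecialLinearGroup.apply_eq_zero_of_mem_center {n R : Type*} [Fintype n]
    [DecidableEq n] [CommRing R] {A : SpecialLinearGroup n R}
    (hA : A ∈ Subgroup.center (SpecialLinearGroup n R)) {i j : n} (hij : i ≠ j) :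
    A i j = 0 := by
  rw [← scalar_eq_self_of_mem_center hA i]
  simp [hij]

lemma sin_smul_Gmat_pow (q k : ℕ) :
    sin (π / q) • ((Gmat q ^ k : SpecialLinearGroup (Fin 2) ℝ) : Matrix (Fin 2) (Fin 2) ℝ) =
      !![-sin ((k - 1) * (π / q)), -sin (k * (π / q));
        sin (k * (π / q)), sin ((k + 1) * (π / q))] := by
  rw [Matrix.SpecialLinearGroup.coe_pow]
  exact sin_smul_companion_two_cos_pow _ k

lemma Gmat_pow_self {q : ℕ} (hq : 2 ≤ q) : Gmat q ^ q = -1 := by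
  have hqθ : (q : ℝ) * (π / q) = π := mul_div_cancel₀ _ (by positivity)
  apply Subtype.ext
  refine smul_right_injective _ (sin_pi_div_natCast_pos hq).ne' ?_
  simp only [sin_smul_Gmat_pow, sub_mul, add_mul, one_mul, hqθ]
  ext i j; fin_cases i <;> fin_cases j <;> simp [sin_pi_sub, sin_add]

lemma Gmat_pow_notMem_center {q k : ℕ} (hk : 0 < k) (hkq : k < q) :
    Gmat q ^ k ∉ Subgroup.center (SpecialLinearGroup (Fin 2) ℝ) := by
  intro hcen
  have hsin : 0 < sin (k * (π / q)) := by
    have hq : (0 : ℝ) < q := by exact_mod_cast hk.trans hkq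
    apply sin_pos_of_pos_of_lt_pi (by positivity)
    calc (k : ℝ) * (π / q) < q * (π / q) := by gcongr
      _ = π := mul_div_cancel₀ _ hq.ne'
  have h10 : sin (π / q) * (Gmat q ^ k) 1 0 = sin (k * (π / q)) := by
    simpa using congr_fun₂ (sin_smul_Gmat_pow q k) 1 0
  rw [SpecialLinearGroup.apply_eq_zero_of_mem_center hcen (by decide), mul_zero] at h10
  linarith

/-- For every integer `q ≥ 3`, the element `G` of `PSL(2,ℝ)` has order exactly `q`:
`G^q = 1` and `G^k ≠ 1` for every integer `k` with `1 ≤ k < q`. -/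
theorem hecke_G_order (q : ℕ) (hq : 3 ≤ q) :
    Gpsl q ^ q = 1 ∧ ∀ k : ℕ, 1 ≤ k → k < q → Gpsl q ^ k ≠ 1 := by
  refine ⟨?_, fun k hk hkq => ?_⟩
  · rw [Gpsl, ← QuotientGroup.mk_pow, QuotientGroup.eq_one_iff, Gmat_pow_self (by omega)]
    exact Subgroup.mem_center_iff.mpr Commute.neg_one_right
  · rw [Gpsl, ← QuotientGroup.mk_pow, Ne, QuotientGroup.eq_one_iff]
    exact Gmat_pow_notMem_center hk hkq
end

section
/- For every integer q ≥ 3, the group homomorphism from the free product (ℤ/2ℤ) ∗ (ℤ/qℤ) to PSL(2,ℝ) that sends the canonical generator of ℤ/2ℤ to K and the canonical generator of ℤ/qℤ to G is injective; consequently the Hecke group H_q is isomorphic to the free product (ℤ/2ℤ) ∗ (ℤ/qℤ), i.e., H_q has the presentation ⟨K, G : K² = G^q = e⟩. -/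
open Matrix

/-- The Hecke group `H_q`, the subgroup of `PSL(2,ℝ)` generated by `K` and `G`. -/
noncomputable def HeckeGroup (q : ℕ) : Subgroup PSL2R := Subgroup.closure {Kpsl, Gpsl q}

/-! The proof is a ping-pong argument for the action of `PSL(2,ℝ)` on the real projective line.
Let `P` and `N` be the lines of positive and negative slope. `K` swaps the coordinates up to
sign, so it maps `N` into `P`. For `0 < m < q` the entries of `G^m` are values of Chebyshev
polynomials at `cos (π/q)`, i.e. `U_k(cos (π/q)) = sin ((k+1)π/q) / sin (π/q)` with
`-1 ≤ k ≤ q - 1`, and their signs show that `G^m` maps `P` into `N`. The ping-pong lemma then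
makes `φ` injective, and its range is generated by the images `K`, `G` of the generators. -/

open Polynomial Polynomial.Chebyshev Real
open scoped LinearAlgebra.Projectivization MatrixGroups Pointwise

universe u

namespace Monoid.Coprod

variable {A B : Type u} [Group A] [Group B] {P : Type*} [Group P]

instance instGroupCond : (b : Bool) → Group (cond b B A)
  | false => ‹Group A›
  | true => ‹Group B›

def toCoprodI : A ∗ B →* CoprodI (fun b => cond b B A) :=
  lift (CoprodI.of (M := fun b => cond b B A) (i := false))
    (CoprodI.of (M := fun b => cond b B A) (i := true))

def ofCoprodI : CoprodI (fun b => cond b B A) →* A ∗ B :=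
  CoprodI.lift fun
    | false => inl
    | true => inr

theorem toCoprodI_injective : Function.Injective (toCoprodI (A := A) (B := B)) :=
  Function.LeftInverse.injective (g := ofCoprodI) <| DFunLike.congr_fun <|
    show ofCoprodI.comp toCoprodI = MonoidHom.id (A ∗ B) from
      hom_ext (by ext; simp [ofCoprodI, toCoprodI]) (by ext; simp [ofCoprodI, toCoprodI])

def condHom (f : A →* P) (g : B →* P) : (b : Bool) → cond b B A →* P
  | false => f
  | true => g

theorem lift_eq_coprodI_lift_comp (f : A →* P) (g : B →* P) :
    lift f g = (CoprodI.lift (condHom f g)).comp toCoprodI :=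
  hom_ext (by ext; simp [condHom, toCoprodI]) (by ext; simp [condHom, toCoprodI])

open Cardinal in
theorem lift_injective_of_ping_pong {α : Type*} [MulAction P α] (f : A →* P) (g : B →* P)
    (hcard : 3 ≤ #A ∨ 3 ≤ #B) {X Y : Set α} (hX : X.Nonempty) (hY : Y.Nonempty)
    (hXY : Disjoint X Y) (hf : ∀ a ≠ 1, f a • Y ⊆ X) (hg : ∀ b ≠ 1, g b • X ⊆ Y) :
    Function.Injective (lift f g) := by
  rw [lift_eq_coprodI_lift_comp, MonoidHom.coe_comp]
  refine (CoprodI.lift_injective_of_ping_pong _ ?_ (fun b => cond b Y X) ?_ ?_ ?_).comp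
    toCoprodI_injective
  · exact hcard.elim (fun h => Or.inr ⟨false, h⟩) (fun h => Or.inr ⟨true, h⟩)
  · rintro (_ | _) <;> assumption
  · rintro (_ | _) (_ | _) h <;> first | exact (h rfl).elim | exact hXY | exact hXY.symm
  · rintro (_ | _) (_ | _) h <;> first | exact (h rfl).elim | exact hf | exact hg

end Monoid.Coprod

theorem Multiplicative.ofAdd_one_pow_val {n : ℕ} [NeZero n] (x : Multiplicative (ZMod n)) :
    ofAdd (1 : ZMod n) ^ x.toAdd.val = x := by
  rw [← ofAdd_nsmul, nsmul_one, ZMod.natCast_zmod_val, ofAdd_toAdd]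

theorem Multiplicative.exists_eq_ofAdd_one_pow {n : ℕ} [NeZero n] {x : Multiplicative (ZMod n)}
    (hx : x ≠ 1) : ∃ m, 0 < m ∧ m < n ∧ x = ofAdd (1 : ZMod n) ^ m :=
  ⟨x.toAdd.val, ZMod.val_pos.mpr (toAdd_eq_zero.not.mpr hx), ZMod.val_lt _,
    (ofAdd_one_pow_val x).symm⟩

theorem MonoidHom.range_eq_zpowers_ofAdd_one {n : ℕ} [NeZero n] {P : Type*} [Group P]
    (f : Multiplicative (ZMod n) →* P) : f.range = Subgroup.zpowers (f (.ofAdd 1)) := by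
  refine le_antisymm ?_ (Subgroup.zpowers_le.mpr ⟨_, rfl⟩)
  rintro _ ⟨x, rfl⟩
  rw [← Multiplicative.ofAdd_one_pow_val x, map_pow]
  exact pow_mem (Subgroup.mem_zpowers _) _

theorem mulVec_zero_mul_mulVec_one {R : Type*} [CommRing R] (M : Matrix (Fin 2) (Fin 2) R)
    (v : Fin 2 → R) :
    (M *ᵥ v) 0 * (M *ᵥ v) 1 = M 0 0 * M 1 0 * v 0 ^ 2
      + (M 0 0 * M 1 1 + M 0 1 * M 1 0) * (v 0 * v 1) + M 0 1 * M 1 1 * v 1 ^ 2 := by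
  simp only [mulVec, dotProduct, Fin.sum_univ_two]
  ring

def posSlope : Set (ℙ ℝ (Fin 2 → ℝ)) := {p | 0 < p.rep 0 * p.rep 1}

def negSlope : Set (ℙ ℝ (Fin 2 → ℝ)) := {p | p.rep 0 * p.rep 1 < 0}

theorem Projectivization.exists_rep_mul_rep_mk (v : Fin 2 → ℝ) (hv : v ≠ 0) :
    ∃ a : ℝ, 0 < a ∧ (mk ℝ v hv).rep 0 * (mk ℝ v hv).rep 1 = a * (v 0 * v 1) := by
  obtain ⟨a, ha⟩ := exists_smul_eq_mk_rep ℝ v hv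
  refine ⟨(a : ℝ) ^ 2, by have := a.ne_zero; positivity, ?_⟩
  rw [← ha]
  simp only [Pi.smul_apply, Units.smul_def, smul_eq_mul]
  ring

theorem mk_mem_posSlope_iff {v : Fin 2 → ℝ} (hv : v ≠ 0) :
    Projectivization.mk ℝ v hv ∈ posSlope ↔ 0 < v 0 * v 1 := by
  obtain ⟨a, ha, h⟩ := Projectivization.exists_rep_mul_rep_mk v hv
  rw [posSlope, Set.mem_ofPred_eq, h, mul_pos_iff_of_pos_left ha]

theorem mk_mem_negSlope_iff {v : Fin 2 → ℝ} (hv : v ≠ 0) :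
    Projectivization.mk ℝ v hv ∈ negSlope ↔ v 0 * v 1 < 0 := by
  obtain ⟨a, ha, h⟩ := Projectivization.exists_rep_mul_rep_mk v hv
  rw [negSlope, Set.mem_ofPred_eq, h, ← smul_eq_mul, smul_neg_iff_of_pos_left ha]

theorem smul_negSlope_subset_posSlope (g : SL(2, ℝ)) (h₀ : 0 ≤ g 0 0 * g 1 0)
    (h₁ : 0 ≤ g 0 1 * g 1 1) (h : g 0 0 * g 1 1 + g 0 1 * g 1 0 < 0) :
    (g : PSL(2, ℝ)) • negSlope ⊆ posSlope := by
  refine Set.smul_set_subset_iff.mpr fun p hp => ?_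
  induction p using Projectivization.ind with | h v hv =>
  rw [mk_mem_negSlope_iff] at hp
  rw [ProjectiveSpecialLinearGroup.smul_proj_mk, Projectivization.smul_mk, mk_mem_posSlope_iff]
  change 0 < (g.1 *ᵥ v) 0 * (g.1 *ᵥ v) 1
  rw [mulVec_zero_mul_mulVec_one]
  nlinarith [sq_nonneg (v 0), sq_nonneg (v 1)]

theorem smul_posSlope_subset_negSlope (g : SL(2, ℝ)) (h₀ : g 0 0 * g 1 0 ≤ 0)
    (h₁ : g 0 1 * g 1 1 ≤ 0) (h : g 0 0 * g 1 1 + g 0 1 * g 1 0 < 0) :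
    (g : PSL(2, ℝ)) • posSlope ⊆ negSlope := by
  refine Set.smul_set_subset_iff.mpr fun p hp => ?_
  induction p using Projectivization.ind with | h v hv =>
  rw [mk_mem_posSlope_iff] at hp
  rw [ProjectiveSpecialLinearGroup.smul_proj_mk, Projectivization.smul_mk, mk_mem_negSlope_iff]
  change (g.1 *ᵥ v) 0 * (g.1 *ᵥ v) 1 < 0
  rw [mulVec_zero_mul_mulVec_one]
  nlinarith [sq_nonneg (v 0), sq_nonneg (v 1)]

theorem posSlope_nonempty : posSlope.Nonempty :=
  ⟨Projectivization.mk ℝ ![1, 1] (by simp), (mk_mem_posSlope_iff _).mpr (by simp)⟩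

theorem negSlope_nonempty : negSlope.Nonempty :=
  ⟨Projectivization.mk ℝ ![1, -1] (by simp), (mk_mem_negSlope_iff _).mpr (by simp)⟩

theorem disjoint_posSlope_negSlope : Disjoint posSlope negSlope :=
  Set.disjoint_left.mpr fun p (hp : 0 < p.rep 0 * p.rep 1) hn => lt_asymm hn hp

theorem Polynomial.Chebyshev.matrix_pow_eq_eval_U {R : Type*} [CommRing R] (x : R) (n : ℕ) :
    !![0, -1; 1, 2 * x] ^ n = !![-(U R (n - 2)).eval x, -(U R (n - 1)).eval x;
      (U R (n - 1)).eval x, (U R n).eval x] := by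
  induction n with
  | zero => simp [U_neg_two, U_neg_one, one_fin_two]
  | succ n ih =>
    rw [pow_succ, ih, mul_fin_two]
    push_cast
    rw [show (n : ℤ) + 1 - 2 = n - 1 by ring, show (n : ℤ) + 1 - 1 = n by ring, U_add_one,
      U_eq R (n : ℤ)]
    simp only [eval_sub, eval_mul, eval_X, eval_ofNat]
    congr 1; ring_nf

theorem Polynomial.Chebyshev.U_real_cos_nonneg {θ : ℝ} (hθ : 0 < θ) (hθπ : θ < π) {n : ℤ}
    (h₀ : 0 ≤ (n + 1) * θ) (hπ : (n + 1) * θ ≤ π) : 0 ≤ (U ℝ n).eval (cos θ) := by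
  have hsin := U_real_cos θ n
  rw [← mul_nonneg_iff_of_pos_right (sin_pos_of_pos_of_lt_pi hθ hθπ), hsin]
  exact sin_nonneg_of_nonneg_of_le_pi h₀ hπ

theorem Polynomial.Chebyshev.U_real_cos_pos {θ : ℝ} (hθ : 0 < θ) (hθπ : θ < π) {n : ℤ}
    (h₀ : 0 < (n + 1) * θ) (hπ : (n + 1) * θ < π) : 0 < (U ℝ n).eval (cos θ) := by
  have hsin := U_real_cos θ n
  rw [← mul_pos_iff_of_pos_right (sin_pos_of_pos_of_lt_pi hθ hθπ), hsin]
  exact sin_pos_of_pos_of_lt_pi h₀ hπ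

theorem Kpsl_smul_negSlope_subset : Kpsl • negSlope ⊆ posSlope :=
  smul_negSlope_subset_posSlope Kmat (by simp [Kmat]) (by simp [Kmat]) (by simp [Kmat])

theorem Gpsl_pow_smul_posSlope_subset {q m : ℕ} (hm : 0 < m) (hmq : m < q) :
    Gpsl q ^ m • posSlope ⊆ negSlope := by
  have hq : (2 : ℝ) ≤ q := by exact_mod_cast (by omega : 2 ≤ q)
  have hθ : 0 < π / q := by positivity
  have hθπ : π / q < π := div_lt_self pi_pos (by linarith)
  set u : ℤ → ℝ := fun n => (U ℝ n).eval (cos (π / q))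
  have hu_nonneg (n : ℤ) (h₀ : -1 ≤ n) (h₁ : n + 1 ≤ q) : 0 ≤ u n := by
    have h₀' : (-1 : ℝ) ≤ n := by exact_mod_cast h₀
    have h₁' : (n : ℝ) + 1 ≤ q := by exact_mod_cast h₁
    refine U_real_cos_nonneg hθ hθπ (mul_nonneg (by linarith) hθ.le) ?_
    rw [mul_div_assoc', div_le_iff₀ (by linarith)]
    nlinarith [pi_pos]
  have hu_pos (n : ℤ) (h₀ : 0 ≤ n) (h₁ : n + 2 ≤ q) : 0 < u n := by
    have h₀' : (0 : ℝ) ≤ n := by exact_mod_cast h₀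
    have h₁' : (n : ℝ) + 2 ≤ q := by exact_mod_cast h₁
    refine U_real_cos_pos hθ hθπ (mul_pos (by linarith) hθ) ?_
    rw [mul_div_assoc', div_lt_iff₀ (by linarith)]
    nlinarith [pi_pos]
  have hGm : ((Gmat q ^ m : SL(2, ℝ)) : Matrix (Fin 2) (Fin 2) ℝ) =
      !![-u (m - 2), -u (m - 1); u (m - 1), u m] :=
    (Matrix.SpecialLinearGroup.coe_pow (Gmat q) m).trans (matrix_pow_eq_eval_U (cos (π / q)) m)
  have h₂ := hu_nonneg (m - 2) (by omega) (by omega)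
  have h₁ := hu_pos (m - 1) (by omega) (by omega)
  have h₀ := hu_nonneg m (by omega) (by omega)
  rw [Gpsl, ← QuotientGroup.mk_pow]
  apply smul_posSlope_subset_negSlope <;> simp only [hGm, of_apply, cons_val', cons_val_zero,
    cons_val_one, empty_val', cons_val_fin_one] <;> nlinarith

open Monoid.Coprod in
/-- For every integer `q ≥ 3`, the group homomorphism from the free product
`(ℤ/2ℤ) ∗ (ℤ/qℤ)` to `PSL(2,ℝ)` sending the canonical generator of `ℤ/2ℤ` to `K` and the
canonical generator of `ℤ/qℤ` to `G` is injective; consequently the Hecke group `H_q` is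
isomorphic to `(ℤ/2ℤ) ∗ (ℤ/qℤ)`, i.e. `H_q` has the presentation `⟨K, G : K² = G^q = e⟩`. -/
theorem hecke_free_product (q : ℕ) (hq : 3 ≤ q)
    (φ : Monoid.Coprod (Multiplicative (ZMod 2)) (Multiplicative (ZMod q)) →* PSL2R)
    (hK : φ (Monoid.Coprod.inl (Multiplicative.ofAdd (1 : ZMod 2))) = Kpsl)
    (hG : φ (Monoid.Coprod.inr (Multiplicative.ofAdd (1 : ZMod q))) = Gpsl q) :
    Function.Injective φ ∧ φ.range = HeckeGroup q := by
  have : NeZero q := ⟨by omega⟩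
  constructor
  · rw [lift_unique (f := φ.comp inl) (g := φ.comp inr) rfl rfl]
    refine lift_injective_of_ping_pong _ _ (Or.inr ?_) posSlope_nonempty negSlope_nonempty
      disjoint_posSlope_negSlope ?_ ?_
    · rw [Cardinal.mk_fintype, Fintype.card_multiplicative, ZMod.card]
      exact_mod_cast hq
    · intro a ha
      obtain ⟨m, hm, hm2, rfl⟩ := Multiplicative.exists_eq_ofAdd_one_pow ha
      obtain rfl : m = 1 := by omega
      rw [pow_one, MonoidHom.comp_apply, hK]
      exact Kpsl_smul_negSlope_subset
    · intro b hb
      obtain ⟨m, hm, hmq, rfl⟩ := Multiplicative.exists_eq_ofAdd_one_pow hb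
      rw [map_pow, MonoidHom.comp_apply, hG]
      exact Gpsl_pow_smul_posSlope_subset hm hmq
  · rw [range_eq, MonoidHom.range_eq_zpowers_ofAdd_one, MonoidHom.range_eq_zpowers_ofAdd_one,
      MonoidHom.comp_apply, MonoidHom.comp_apply, hK, hG, HeckeGroup, Set.insert_eq,
      Subgroup.closure_union, Subgroup.zpowers_eq_closure, Subgroup.zpowers_eq_closure]
end
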